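/- Symmetric-gradient identity underlying Korn's inequality on the channel: Let u : ℝ³ → ℝ³ be twice continuously differentiable on a neighborhood of [0,1]×ℝ², 1-periodic in the coordinates x₂ and x₃, and satisfy u₁(0,x₂,x₃) = u₁(1,x₂,x₃) = 0 for all x₂,x₃. Then (1/2) ∫_{(0,1)³} |∇u(x) + ∇u(x)ᵀ|² dx = ∫_{(0,1)³} ( |∇u(x)|² + ((div u)(x))² ) dx, where |·| denotes the Frobenius norm. -/

import Mathlib

open MeasureTheory

/-- Standard basis vectors of `ℝ × ℝ × ℝ`. -/
noncomputable def e3 : Fin 3 → ℝ × ℝ × ℝ := ![(1, 0, 0), (0, 1, 0), (0, 0, 1)]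

/-- The `j`-th partial derivative of a scalar function on `ℝ³`. -/
noncomputable def pd (j : Fin 3) (f : ℝ × ℝ × ℝ → ℝ) (x : ℝ × ℝ × ℝ) : ℝ :=
  fderiv ℝ f x (e3 j)

/-- The Jacobian matrix `(∇u)ᵢⱼ = ∂ⱼuᵢ` of a vector field `u = (u₀,u₁,u₂)`. -/
noncomputable def jac (u : Fin 3 → ℝ × ℝ × ℝ → ℝ) (x : ℝ × ℝ × ℝ) :
    Matrix (Fin 3) (Fin 3) ℝ :=
  Matrix.of fun i j => pd j (u i) x

/-- The divergence `div u = ∂₁u₁ + ∂₂u₂ + ∂₃u₃`. -/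
noncomputable def divg (u : Fin 3 → ℝ × ℝ × ℝ → ℝ) (x : ℝ × ℝ × ℝ) : ℝ :=
  ∑ i, pd i (u i) x

/-- The squared Frobenius norm of a 3×3 real matrix. -/
def frobSq (M : Matrix (Fin 3) (Fin 3) ℝ) : ℝ := ∑ i, ∑ j, (M i j) ^ 2

/-- The open unit cube `(0,1)³`, modelling the channel `(0,1)×𝕋²`. -/
def cube : Set (ℝ × ℝ × ℝ) :=
  Set.Ioo (0 : ℝ) 1 ×ˢ (Set.Ioo (0 : ℝ) 1 ×ˢ Set.Ioo (0 : ℝ) 1)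

/-- The closed strip `[0,1] × ℝ²`. -/
def strip : Set (ℝ × ℝ × ℝ) := Set.Icc (0 : ℝ) 1 ×ˢ (Set.univ : Set (ℝ × ℝ))

open MeasureTheory Set Function

/-!
Pointwise, `|∇u + ∇uᵀ|² = 2|∇u|² + 2 tr(∇u ∇u)` and `(div u)² = (tr ∇u)²`, so it suffices to show
`∫ ∂ⱼuᵢ ∂ᵢuⱼ = ∫ ∂ᵢuᵢ ∂ⱼuⱼ` for every pair `i, j`. By the symmetry of second derivatives the
difference of the integrands is `∂ⱼ(uᵢ ∂ᵢuⱼ) - ∂ᵢ(uᵢ ∂ⱼuⱼ)`, and the integral over the cube of a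
partial derivative `∂ₖF` reduces by Fubini to the boundary values of `F` in the direction `k`. In
the periodic directions these cancel. In the normal direction the fields involved vanish on the
walls, because the normal component of `u` vanishes there and hence so do its tangential
derivatives.
-/

section Coordinates

@[simp] lemma add_smul_e3_zero (x : ℝ × ℝ × ℝ) (t : ℝ) :
    x + t • e3 0 = (x.1 + t, x.2.1, x.2.2) := by
  ext <;> simp [e3]

@[simp] lemma add_smul_e3_one (x : ℝ × ℝ × ℝ) (t : ℝ) :
    x + t • e3 1 = (x.1, x.2.1 + t, x.2.2) := by
  ext <;> simp [e3]

@[simp] lemma add_smul_e3_two (x : ℝ × ℝ × ℝ) (t : ℝ) :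
    x + t • e3 2 = (x.1, x.2.1, x.2.2 + t) := by
  ext <;> simp [e3]

lemma periodic_e3_one {f : ℝ × ℝ × ℝ → ℝ}
    (hf : ∀ x : ℝ × ℝ × ℝ, f (x.1, x.2.1 + 1, x.2.2) = f x) : Periodic f (e3 1) := fun x => by
  rw [← one_smul ℝ (e3 1), add_smul_e3_one]
  exact hf x

lemma periodic_e3_two {f : ℝ × ℝ × ℝ → ℝ}
    (hf : ∀ x : ℝ × ℝ × ℝ, f (x.1, x.2.1, x.2.2 + 1) = f x) : Periodic f (e3 2) := fun x => by
  rw [← one_smul ℝ (e3 2), add_smul_e3_two]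
  exact hf x

@[simp] lemma mem_strip {x : ℝ × ℝ × ℝ} : x ∈ strip ↔ x.1 ∈ Icc (0 : ℝ) 1 := by
  simp [strip]

lemma cube_subset_strip : cube ⊆ strip := fun _ h => mem_strip.2 (Ioo_subset_Icc_self h.1)

lemma measurableSet_cube : MeasurableSet cube :=
  measurableSet_Ioo.prod (measurableSet_Ioo.prod measurableSet_Ioo)

lemma integrableOn_cube_of_continuousOn {E : Type*} [NormedAddCommGroup E] {U : Set (ℝ × ℝ × ℝ)}
    (hUs : strip ⊆ U) {F : ℝ × ℝ × ℝ → E} (hF : ContinuousOn F U) : IntegrableOn F cube := by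
  have hcube : cube ⊆ Icc 0 1 := fun _ ⟨h₁, h₂, h₃⟩ =>
    ⟨⟨h₁.1.le, h₂.1.le, h₃.1.le⟩, ⟨h₁.2.le, h₂.2.le, h₃.2.le⟩⟩
  have hstrip : Icc 0 1 ⊆ strip := fun _ h => mem_strip.2 ⟨h.1.1, h.2.1⟩
  exact ((hF.mono (hstrip.trans hUs)).integrableOn_compact isCompact_Icc).mono_set hcube

end Coordinates

section PartialDerivatives

variable {f g : ℝ × ℝ × ℝ → ℝ} {x : ℝ × ℝ × ℝ}

lemma hasDerivAt_pd_slice {p : ℝ × ℝ × ℝ} {t : ℝ} (j : Fin 3)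
    (hf : DifferentiableAt ℝ f (p + t • e3 j)) :
    HasDerivAt (fun s : ℝ => f (p + s • e3 j)) (pd j f (p + t • e3 j)) t := by
  have h := hf.hasFDerivAt.comp_hasDerivAt t (((hasDerivAt_id t).smul_const (e3 j)).const_add p)
  simp only [Function.comp_def, one_smul] at h
  exact h

lemma pd_eq_zero_of_slice_eq_zero (j : Fin 3) (hf : ∀ s : ℝ, f (x + s • e3 j) = 0) :
    pd j f x = 0 := by
  by_cases hd : DifferentiableAt ℝ f x
  · have h := hasDerivAt_pd_slice (p := x) (t := 0) j (by simpa using hd)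
    simp only [zero_smul, add_zero, hf] at h
    exact h.unique (hasDerivAt_const 0 0)
  · simp [pd, fderiv_zero_of_not_differentiableAt hd]

lemma pd_eq_zero_of_wall {a : ℝ} (hf : ∀ y z : ℝ, f (a, y, z) = 0) {j : Fin 3} (hj : j ≠ 0)
    (y z : ℝ) : pd j f (a, y, z) = 0 :=
  pd_eq_zero_of_slice_eq_zero j fun s => by fin_cases j <;> simp_all

lemma periodic_pd {v : ℝ × ℝ × ℝ} (hf : Periodic f v) (j : Fin 3) :
    Periodic (pd j f) v := fun x => by
  rw [pd, pd, ← fderiv_comp_add_right, show (fun y => f (y + v)) = f from funext hf]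

lemma pd_mul (hf : DifferentiableAt ℝ f x) (hg : DifferentiableAt ℝ g x) (j : Fin 3) :
    pd j (fun y => f y * g y) x = pd j f x * g x + f x * pd j g x := by
  simp only [pd, fderiv_fun_mul hf hg, add_apply, smul_apply, smul_eq_mul]
  ring

lemma pd_pd_comm (hf : ContDiffAt ℝ 2 f x) (i j : Fin 3) :
    pd j (pd i f) x = pd i (pd j f) x := by
  have hdf : DifferentiableAt ℝ (fderiv ℝ f) x :=
    (hf.fderiv_right (m := 1) le_rfl).differentiableAt one_ne_zero
  have hpd : ∀ k m : Fin 3, pd k (pd m f) x = fderiv ℝ (fderiv ℝ f) x (e3 k) (e3 m) := by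
    intro k m
    change fderiv ℝ (fun y => fderiv ℝ f y (e3 m)) x (e3 k) = _
    simp [fderiv_clm_apply hdf (differentiableAt_const (e3 m))]
  rw [hpd, hpd, (hf.isSymmSndFDerivAt (by simp)).eq]

lemma contDiffOn_pd {U : Set (ℝ × ℝ × ℝ)} (hU : IsOpen U) {m n : WithTop ℕ∞}
    (hf : ContDiffOn ℝ n f U) (hmn : m + 1 ≤ n) (j : Fin 3) : ContDiffOn ℝ m (pd j f) U :=
  (hf.fderiv_of_isOpen hU hmn).clm_apply contDiffOn_const

end PartialDerivatives

section Integration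

lemma integral_Ioo_eq_sub_of_hasDerivAt {g g' : ℝ → ℝ} {a b : ℝ} (hab : a ≤ b)
    (hg : ∀ t ∈ Icc a b, HasDerivAt g (g' t) t) (hg' : ContinuousOn g' (Icc a b)) :
    ∫ t in Ioo a b, g' t = g b - g a := by
  rw [← integral_Ioc_eq_integral_Ioo, ← intervalIntegral.integral_of_le hab]
  exact intervalIntegral.integral_eq_sub_of_hasDerivAt
    (fun t ht => hg t (by rwa [uIcc_of_le hab] at ht)) (hg'.intervalIntegrable_of_Icc hab)

lemma integral_Ioo_pd_slice {U : Set (ℝ × ℝ × ℝ)} (hU : IsOpen U) {f : ℝ × ℝ × ℝ → ℝ}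
    (hf : ContDiffOn ℝ 1 f U) {p : ℝ × ℝ × ℝ} (j : Fin 3)
    (hp : ∀ t ∈ Icc (0 : ℝ) 1, p + t • e3 j ∈ U) :
    ∫ t in Ioo (0 : ℝ) 1, pd j f (p + t • e3 j) = f (p + e3 j) - f p := by
  have h := integral_Ioo_eq_sub_of_hasDerivAt zero_le_one
    (fun t ht => hasDerivAt_pd_slice j
      ((hf.differentiableOn one_ne_zero).differentiableAt (hU.mem_nhds (hp t ht))))
    ((contDiffOn_pd hU hf (m := 0) (by simp) j).continuousOn.comp (by fun_prop) hp)
  simpa using h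

variable {α β E : Type*} [MeasurableSpace α] [MeasurableSpace β] {μ : Measure α} {ν : Measure β}
  [SFinite μ] [SFinite ν] [NormedAddCommGroup E] [NormedSpace ℝ E]
  {f : α × β → E} {s : Set α} {t : Set β}

lemma setIntegral_prod_eq_zero_of_forall_fst (h : ∀ x ∈ s, ∫ y in t, f (x, y) ∂ν = 0) :
    ∫ z in s ×ˢ t, f z ∂μ.prod ν = 0 := by
  by_cases hf : IntegrableOn f (s ×ˢ t) (μ.prod ν)
  · rw [setIntegral_prod f hf]
    exact setIntegral_eq_zero_of_forall_eq_zero h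
  · exact integral_undef hf

lemma setIntegral_prod_eq_zero_of_forall_snd (h : ∀ y ∈ t, ∫ x in s, f (x, y) ∂μ = 0) :
    ∫ z in s ×ˢ t, f z ∂μ.prod ν = 0 := by
  rw [← setIntegral_prod_swap]
  exact setIntegral_prod_eq_zero_of_forall_fst h

end Integration

lemma integral_cube_pd_eq_zero {U : Set (ℝ × ℝ × ℝ)} (hU : IsOpen U) (hUs : strip ⊆ U)
    {F : ℝ × ℝ × ℝ → ℝ} (hF : ContDiffOn ℝ 1 F U) (hF₁ : Periodic F (e3 1))
    (hF₂ : Periodic F (e3 2)) (k : Fin 3) (hwall : k = 0 → ∀ y z : ℝ, F (1, y, z) = F (0, y, z)) :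
    ∫ x in cube, pd k F x = 0 := by
  fin_cases k
  · refine setIntegral_prod_eq_zero_of_forall_snd fun ⟨y, z⟩ _ => ?_
    have h := integral_Ioo_pd_slice hU hF (p := (0, y, z)) 0 fun t ht => hUs (by simpa using ht)
    simpa [e3, hwall rfl] using h
  · refine setIntegral_prod_eq_zero_of_forall_fst fun a ha => ?_
    refine setIntegral_prod_eq_zero_of_forall_snd fun z _ => ?_
    have h := integral_Ioo_pd_slice hU hF (p := (a, 0, z)) 1 fun t ht =>
      hUs (by simpa using Ioo_subset_Icc_self ha)
    simpa [hF₁ _] using h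
  · refine setIntegral_prod_eq_zero_of_forall_fst fun a ha => ?_
    refine setIntegral_prod_eq_zero_of_forall_fst fun y _ => ?_
    have h := integral_Ioo_pd_slice hU hF (p := (a, y, 0)) 2 fun t ht =>
      hUs (by simpa using Ioo_subset_Icc_self ha)
    simpa [hF₂ _] using h

lemma frobSq_add_transpose (M : Matrix (Fin 3) (Fin 3) ℝ) :
    frobSq (M + M.transpose) = 2 * frobSq M + 2 * (M * M).trace := by
  simp only [frobSq, Matrix.trace, Matrix.diag, Matrix.mul_apply, Matrix.add_apply,
    Matrix.transpose_apply, Fin.sum_univ_three]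
  ring

lemma trace_jac (u : Fin 3 → ℝ × ℝ × ℝ → ℝ) (x : ℝ × ℝ × ℝ) : (jac u x).trace = divg u x := rfl

lemma continuousOn_jac {u : Fin 3 → ℝ × ℝ × ℝ → ℝ} {U : Set (ℝ × ℝ × ℝ)} (hU : IsOpen U)
    (hu : ∀ i, ContDiffOn ℝ 1 (u i) U) : ContinuousOn (jac u) U :=
  continuousOn_pi.2 fun i => continuousOn_pi.2 fun j =>
    (contDiffOn_pd hU (hu i) (m := 0) (by simp) j).continuousOn

section ChannelField

variable {u : Fin 3 → ℝ × ℝ × ℝ → ℝ} {U : Set (ℝ × ℝ × ℝ)}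

lemma integral_cube_pd_mul_pd_eq (hU : IsOpen U) (hUs : strip ⊆ U)
    (hreg : ∀ i, ContDiffOn ℝ 2 (u i) U) (hper₁ : ∀ i, Periodic (u i) (e3 1))
    (hper₂ : ∀ i, Periodic (u i) (e3 2)) (hbc0 : ∀ y z : ℝ, u 0 (0, y, z) = 0)
    (hbc1 : ∀ y z : ℝ, u 0 (1, y, z) = 0) (i j : Fin 3) :
    ∫ x in cube, pd j (u i) x * pd i (u j) x = ∫ x in cube, pd i (u i) x * pd j (u j) x := by
  have hu : ∀ k, ContDiffOn ℝ 1 (u k) U := fun k => (hreg k).of_le one_le_two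
  have hdu : ∀ k m, ContDiffOn ℝ 1 (pd m (u k)) U := fun k m =>
    contDiffOn_pd hU (hreg k) (by norm_num) m
  have hint : ∀ {F : ℝ × ℝ × ℝ → ℝ}, ContinuousOn F U → IntegrableOn F cube :=
    integrableOn_cube_of_continuousOn hUs
  have hFc : ContDiffOn ℝ 1 (fun x => u i x * pd i (u j) x) U := (hu i).mul (hdu j i)
  have hGc : ContDiffOn ℝ 1 (fun x => u i x * pd j (u j) x) U := (hu i).mul (hdu j j)
  have hwall : ∀ a : ℝ, (∀ y z : ℝ, u 0 (a, y, z) = 0) →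
      ∀ y z : ℝ, u i (a, y, z) * pd i (u 0) (a, y, z) = 0 := by
    intro a ha y z
    rcases eq_or_ne i 0 with rfl | hi
    · rw [ha, zero_mul]
    · rw [pd_eq_zero_of_wall ha hi, mul_zero]
  have hdiv : EqOn (fun x => pd j (u i) x * pd i (u j) x - pd i (u i) x * pd j (u j) x)
      (fun x => pd j (fun x => u i x * pd i (u j) x) x - pd i (fun x => u i x * pd j (u j) x) x)
      cube := by
    intro x hx
    have hxU : U ∈ nhds x := hU.mem_nhds (hUs (cube_subset_strip hx))
    have hd : ∀ {f : ℝ × ℝ × ℝ → ℝ}, ContDiffOn ℝ 1 f U → DifferentiableAt ℝ f x := fun hf =>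
      (hf.differentiableOn one_ne_zero).differentiableAt hxU
    simp only [pd_mul (hd (hu i)) (hd (hdu j i)), pd_mul (hd (hu i)) (hd (hdu j j)),
      pd_pd_comm ((hreg j).contDiffAt hxU) i j]
    ring
  have hF : ∫ x in cube, pd j (fun x => u i x * pd i (u j) x) x = 0 :=
    integral_cube_pd_eq_zero hU hUs hFc ((hper₁ i).mul (periodic_pd (hper₁ j) i))
      ((hper₂ i).mul (periodic_pd (hper₂ j) i)) j (by
        rintro rfl y z
        rw [hwall 1 hbc1, hwall 0 hbc0])
  have hG : ∫ x in cube, pd i (fun x => u i x * pd j (u j) x) x = 0 :=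
    integral_cube_pd_eq_zero hU hUs hGc ((hper₁ i).mul (periodic_pd (hper₁ j) j))
      ((hper₂ i).mul (periodic_pd (hper₂ j) j)) i (by
        rintro rfl y z
        rw [hbc1, hbc0, zero_mul, zero_mul])
  rw [← sub_eq_zero, ← integral_sub (hint ((hdu i j).continuousOn.fun_mul (hdu j i).continuousOn))
      (hint ((hdu i i).continuousOn.fun_mul (hdu j j).continuousOn)),
    setIntegral_congr_fun measurableSet_cube hdiv,
    integral_sub (hint (contDiffOn_pd hU hFc (m := 0) (by simp) j).continuousOn)
      (hint (contDiffOn_pd hU hGc (m := 0) (by simp) i).continuousOn), hF, hG, sub_zero]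

lemma integral_cube_trace_jac_mul_self (hU : IsOpen U) (hUs : strip ⊆ U)
    (hreg : ∀ i, ContDiffOn ℝ 2 (u i) U) (hper₁ : ∀ i, Periodic (u i) (e3 1))
    (hper₂ : ∀ i, Periodic (u i) (e3 2)) (hbc0 : ∀ y z : ℝ, u 0 (0, y, z) = 0)
    (hbc1 : ∀ y z : ℝ, u 0 (1, y, z) = 0) :
    ∫ x in cube, (jac u x * jac u x).trace = ∫ x in cube, (jac u x).trace ^ 2 := by
  have hJ := continuousOn_jac hU fun i => (hreg i).of_le one_le_two
  have hint : ∀ i j k l, IntegrableOn (fun x => jac u x i j * jac u x k l) cube :=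
    fun i j k l => integrableOn_cube_of_continuousOn hUs <|
      ((continuous_apply_apply i j).comp_continuousOn hJ).fun_mul
        ((continuous_apply_apply k l).comp_continuousOn hJ)
  simp only [Matrix.trace, Matrix.diag, Matrix.mul_apply, sq, Finset.sum_mul_sum]
  rw [integral_finsetSum _ fun i _ => integrable_finsetSum _ fun j _ => hint i j j i,
    integral_finsetSum _ fun i _ => integrable_finsetSum _ fun j _ => hint i i j j]
  refine Finset.sum_congr rfl fun i _ => ?_
  rw [integral_finsetSum _ fun j _ => hint i j j i, integral_finsetSum _ fun j _ => hint i i j j]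
  exact Finset.sum_congr rfl fun j _ =>
    integral_cube_pd_mul_pd_eq hU hUs hreg hper₁ hper₂ hbc0 hbc1 i j

end ChannelField

/-- **Symmetric-gradient identity underlying Korn's inequality on the channel.**
Under the tangency and periodicity conditions,
`(1/2) ∫ |∇u + ∇uᵀ|² = ∫ (|∇u|² + (div u)²)` over `(0,1)³`. -/
theorem symmetric_gradient_identity_channel
    (u : Fin 3 → ℝ × ℝ × ℝ → ℝ)
    (U : Set (ℝ × ℝ × ℝ)) (hU : IsOpen U) (hUs : strip ⊆ U)
    (hreg : ∀ i, ContDiffOn ℝ 2 (u i) U)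
    (hper2 : ∀ i, ∀ x : ℝ × ℝ × ℝ, u i (x.1, x.2.1 + 1, x.2.2) = u i x)
    (hper3 : ∀ i, ∀ x : ℝ × ℝ × ℝ, u i (x.1, x.2.1, x.2.2 + 1) = u i x)
    (hbc0 : ∀ y z : ℝ, u 0 (0, y, z) = 0)
    (hbc1 : ∀ y z : ℝ, u 0 (1, y, z) = 0) :
    (1 / 2) * ∫ x in cube, frobSq (jac u x + (jac u x).transpose) =
      ∫ x in cube, (frobSq (jac u x) + (divg u x) ^ 2) := by
  have hJ := continuousOn_jac hU fun i => (hreg i).of_le one_le_two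
  have hint : ∀ {g : Matrix (Fin 3) (Fin 3) ℝ → ℝ}, Continuous g →
      IntegrableOn (fun x => g (jac u x)) cube := fun hg =>
    integrableOn_cube_of_continuousOn hUs (hg.comp_continuousOn hJ)
  have hfrob : IntegrableOn (fun x => frobSq (jac u x)) cube := hint (by unfold frobSq; fun_prop)
  have htr : IntegrableOn (fun x => (jac u x * jac u x).trace) cube :=
    hint (g := fun M => (M * M).trace) (by unfold Matrix.trace Matrix.diag; fun_prop)
  have htr2 : IntegrableOn (fun x => (jac u x).trace ^ 2) cube :=
    hint (g := fun M => M.trace ^ 2) (by unfold Matrix.trace Matrix.diag; fun_prop)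
  simp only [frobSq_add_transpose, ← trace_jac]
  rw [integral_add (hfrob.const_mul 2) (htr.const_mul 2), integral_add hfrob htr2,
    integral_const_mul, integral_const_mul,
    integral_cube_trace_jac_mul_self hU hUs hreg (fun i => periodic_e3_one (hper2 i))
      (fun i => periodic_e3_two (hper3 i)) hbc0 hbc1]
  ring
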